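/- Let α > 1 and P(u) = ((1+u²)^α − 1)/(2α). Then for any u ≥ 0 and any t with 0 < t ≤ 1, one has t^(2α) P(u) ≤ P(t u) ≤ t² P(u). -/

import Mathlib

/-! With `s = t²` and `y = u²` both bounds are statements about the convex function `x ↦ x ^ α`
on `[0, ∞)`. The upper bound is convexity between the points `1` and `1 + y`. The lower bound is
`(s + s y) ^ α - s ^ α ≤ (1 + s y) ^ α - 1`: a convex function has increments over intervals of
fixed length that grow as the interval moves to the right. -/

open Set

theorem ConvexOn.sub_le_sub_add_right {𝕜 : Type*} [Field 𝕜] [LinearOrder 𝕜] [IsStrictOrderedRing 𝕜]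
    {s : Set 𝕜} {f : 𝕜 → 𝕜} (hf : ConvexOn 𝕜 s f) {a b c : 𝕜} (ha : a ∈ s) (hbc : b + c ∈ s)
    (hab : a ≤ b) (hc : 0 ≤ c) : f (a + c) - f a ≤ f (b + c) - f b := by
  rcases (add_nonneg (sub_nonneg.2 hab) hc).eq_or_lt with hd | hd
  · obtain ⟨rfl, rfl⟩ : b = a ∧ c = 0 := by constructor <;> linarith
    simp
  -- `a + c` and `b` are the two convex combinations of `a` and `b + c` with swapped weights.
  have hw₁ : 0 ≤ (b - a) / (b - a + c) := div_nonneg (by linarith) hd.le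
  have hw₂ : 0 ≤ c / (b - a + c) := div_nonneg hc hd.le
  have hsum : (b - a) / (b - a + c) + c / (b - a + c) = 1 := by field_simp
  have h₁ := hf.2 ha hbc hw₁ hw₂ hsum
  have h₂ := hf.2 ha hbc hw₂ hw₁ (by rw [add_comm, hsum])
  simp only [smul_eq_mul] at h₁ h₂
  have e₁ : (b - a) / (b - a + c) * a + c / (b - a + c) * (b + c) = a + c := by
    field_simp; ring
  have e₂ : c / (b - a + c) * a + (b - a) / (b - a + c) * (b + c) = b := by
    field_simp; ring
  rw [e₁] at h₁
  rw [e₂] at h₂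
  linear_combination h₁ + h₂ + (f a + f (b + c)) * hsum

theorem rpow_one_add_mul_sub_one_le {α s y : ℝ} (hα : 1 ≤ α) (hs₀ : 0 ≤ s) (hs₁ : s ≤ 1)
    (hy : 0 ≤ y) : (1 + s * y) ^ α - 1 ≤ s * ((1 + y) ^ α - 1) := by
  have h := (convexOn_rpow hα).2 (mem_Ici.2 (by linarith : (0 : ℝ) ≤ 1 + y))
    (show (1 : ℝ) ∈ Ici 0 from zero_le_one' ℝ) hs₀ (sub_nonneg.2 hs₁) (add_sub_cancel s 1)
  simp only [smul_eq_mul, Real.one_rpow, mul_one] at h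
  rw [show s * (1 + y) + (1 - s) = 1 + s * y by ring] at h
  linarith

theorem rpow_mul_rpow_one_add_sub_one_le {α s y : ℝ} (hα : 1 ≤ α) (hs₀ : 0 ≤ s) (hs₁ : s ≤ 1)
    (hy : 0 ≤ y) : s ^ α * ((1 + y) ^ α - 1) ≤ (1 + s * y) ^ α - 1 := by
  have hsy : 0 ≤ s * y := mul_nonneg hs₀ hy
  have h := (convexOn_rpow hα).sub_le_sub_add_right hs₀
    (mem_Ici.2 (by linarith : (0 : ℝ) ≤ 1 + s * y)) hs₁ hsy
  have hmul : s ^ α * (1 + y) ^ α = (s + s * y) ^ α := by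
    rw [← Real.mul_rpow hs₀ (by linarith), mul_one_add]
  rw [Real.one_rpow] at h
  linarith

theorem stmt_1 (α : ℝ) (hα : 1 < α)
    (P : ℝ → ℝ) (hP : ∀ s : ℝ, P s = ((1 + s ^ 2) ^ α - 1) / (2 * α)) :
    ∀ u : ℝ, 0 ≤ u → ∀ t : ℝ, 0 < t → t ≤ 1 →
      t ^ (2 * α) * P u ≤ P (t * u) ∧ P (t * u) ≤ t ^ 2 * P u := by
  intro u _ t ht ht1
  have hs₁ : t ^ 2 ≤ 1 := pow_le_one₀ ht.le ht1
  have hpow : t ^ (2 * α) = (t ^ 2) ^ α := by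
    rw [Real.rpow_mul ht.le, Real.rpow_two]
  have h2α : 0 < 2 * α := by linarith
  rw [hP, hP, mul_pow, hpow, mul_div_assoc', mul_div_assoc']
  exact ⟨div_le_div_of_nonneg_right (rpow_mul_rpow_one_add_sub_one_le hα.le (by positivity) hs₁
      (sq_nonneg u)) h2α.le,
    div_le_div_of_nonneg_right (rpow_one_add_mul_sub_one_le hα.le (by positivity) hs₁
      (sq_nonneg u)) h2α.le⟩
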